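/- (Straightening diffeomorphism of the ellipse, Lemma 6.1, part 1.) Let γ ≥ 1. Then: (i) for every θ ∈ (−π/2, π/2), the derivative of θ ↦ arctan(tanθ/γ) equals 1/g_γ(θ); (ii) ∫₀^{2π} dθ/g_γ(θ) = 2π; (iii) consequently the function β(θ) := ∫₀^θ (1/g_γ(s) − 1) ds is C^∞, odd, π-periodic, and coincides with arctan(tanθ/γ) − θ for every θ ∈ (−π/2, π/2). -/

import Mathlib

open Real MeasureTheory Filter Set Topology
open scoped ContDiff

/-- `g_γ(θ) := γ cos²θ + γ⁻¹ sin²θ`. -/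
noncomputable def gell (γ θ : ℝ) : ℝ := γ * Real.cos θ ^ 2 + γ⁻¹ * Real.sin θ ^ 2

/-- `β(θ) := ∫₀^θ (1/g_γ(s) − 1) ds`. -/
noncomputable def betaStr (γ θ : ℝ) : ℝ := ∫ s in (0:ℝ)..θ, (1 / gell γ s - 1)

/-!
On `(-π/2, π/2)` the function `θ ↦ arctan (tan θ / γ)` is a primitive of `1 / g_γ` vanishing at `0`,
and it tends to `π/2` at `π/2`; so `∫₀^{π/2} 1/g_γ = π/2`. Since `g_γ` is even and `π`-periodic,
the integral of `1/g_γ` over a period is `π`, which makes the integrand of `β` have mean zero over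
a period: hence `β` is `π`-periodic, and odd because its integrand is even.
-/

theorem Function.Even.intervalIntegral_zero_neg {E : Type*} [NormedAddCommGroup E]
    [NormedSpace ℝ E] {f : ℝ → E} (hf : Function.Even f) (θ : ℝ) :
    ∫ x in (0:ℝ)..-θ, f x = -∫ x in (0:ℝ)..θ, f x := by
  rw [intervalIntegral.integral_symm, neg_inj, ← neg_zero,
    ← intervalIntegral.integral_comp_neg, neg_zero]
  simp only [hf _]

section Ellipse

variable {γ : ℝ}

theorem gell_pos (hγ : 0 < γ) (θ : ℝ) : 0 < gell γ θ := by
  unfold gell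
  rcases (sq_nonneg (cos θ)).eq_or_lt with hc | hc
  · have : 0 < sin θ ^ 2 := by nlinarith [sin_sq_add_cos_sq θ]
    positivity
  · positivity

theorem gell_even (γ : ℝ) : Function.Even (gell γ) := fun θ => by simp [gell]

theorem gell_periodic (γ : ℝ) : Function.Periodic (gell γ) π := fun θ => by
  simp [gell, cos_add_pi, sin_add_pi]

theorem contDiff_one_div_gell (hγ : 0 < γ) {n : WithTop ℕ∞} :
    ContDiff ℝ n fun θ => 1 / gell γ θ := by
  refine contDiff_const.div ?_ fun θ => (gell_pos hγ θ).ne'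
  unfold gell
  fun_prop

theorem intervalIntegrable_one_div_gell (hγ : 0 < γ) (a b : ℝ) :
    IntervalIntegrable (fun θ => 1 / gell γ θ) volume a b :=
  (contDiff_one_div_gell hγ (n := 0)).continuous.intervalIntegrable a b

theorem hasDerivAt_arctan_tan_div (hγ : γ ≠ 0) {θ : ℝ} (hθ : cos θ ≠ 0) :
    HasDerivAt (fun t => arctan (tan t / γ)) (1 / gell γ θ) θ := by
  refine ((hasDerivAt_arctan _).comp θ ((hasDerivAt_tan hθ).div_const γ)).congr_deriv ?_
  have := sin_sq_add_cos_sq θ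
  rw [tan_eq_sin_div_cos, gell]
  field_simp

theorem integral_one_div_gell_eq_arctan (hγ : 0 < γ) {θ : ℝ}
    (hθ : θ ∈ Ioo (-(π / 2)) (π / 2)) :
    ∫ s in (0:ℝ)..θ, 1 / gell γ s = arctan (tan θ / γ) := by
  have h0 : (0:ℝ) ∈ Ioo (-(π / 2)) (π / 2) := ⟨by linarith [pi_pos], by linarith [pi_pos]⟩
  have hsub : uIcc 0 θ ⊆ Ioo (-(π / 2)) (π / 2) := ordConnected_Ioo.uIcc_subset h0 hθ
  rw [intervalIntegral.integral_eq_sub_of_hasDerivAt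
    (fun x hx => hasDerivAt_arctan_tan_div hγ.ne' (cos_pos_of_mem_Ioo (hsub hx)).ne')
    (intervalIntegrable_one_div_gell hγ _ _)]
  simp

theorem integral_one_div_gell_pi_div_two (hγ : 0 < γ) :
    ∫ s in (0:ℝ)..π / 2, 1 / gell γ s = π / 2 := by
  set G := fun θ => ∫ s in (0:ℝ)..θ, 1 / gell γ s
  have hG : Continuous G := intervalIntegral.continuous_primitive
    (intervalIntegrable_one_div_gell hγ) 0
  have hG_eq : G =ᶠ[𝓝[<] (π / 2)] fun θ => arctan (tan θ / γ) :=
    eventually_of_mem (Ioo_mem_nhdsLT_of_mem ⟨by linarith [pi_pos], le_rfl⟩)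
      fun θ hθ => integral_one_div_gell_eq_arctan hγ hθ
  have h_arctan : Tendsto (fun θ => arctan (tan θ / γ)) (𝓝[<] (π / 2)) (𝓝 (π / 2)) :=
    (tendsto_arctan_atTop.mono_right nhdsWithin_le_nhds).comp
      (tendsto_tan_pi_div_two.atTop_div_const hγ)
  exact tendsto_nhds_unique
    ((hG.continuousAt.tendsto.mono_left nhdsWithin_le_nhds).congr' hG_eq) h_arctan

theorem integral_one_div_gell_pi (hγ : 0 < γ) :
    ∫ s in (0:ℝ)..π, 1 / gell γ s = π := by
  have hper : Function.Periodic (fun s => 1 / gell γ s) π := (gell_periodic γ).comp _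
  have heven : Function.Even (fun s => 1 / gell γ s) := (gell_even γ).left_comp _
  have hshift := hper.intervalIntegral_add_eq (-(π / 2)) 0
  rw [show -(π / 2) + π = π / 2 by ring, zero_add] at hshift
  rw [← hshift, ← intervalIntegral.integral_interval_sub_left
    (intervalIntegrable_one_div_gell hγ _ _)
    (intervalIntegrable_one_div_gell hγ _ _),
    heven.intervalIntegral_zero_neg, integral_one_div_gell_pi_div_two hγ]
  ring

theorem integral_one_div_gell_two_pi (hγ : 0 < γ) :
    ∫ s in (0:ℝ)..2 * π, 1 / gell γ s = 2 * π := by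
  have hper : Function.Periodic (fun s => 1 / gell γ s) π := (gell_periodic γ).comp _
  have := hper.intervalIntegral_add_zsmul_eq 2 0 (intervalIntegrable_one_div_gell hγ)
  simp only [zero_add, integral_one_div_gell_pi hγ] at this
  simpa [two_smul, ← two_mul] using this

theorem betaStr_eq_integral_sub (hγ : 0 < γ) (θ : ℝ) :
    betaStr γ θ = (∫ s in (0:ℝ)..θ, 1 / gell γ s) - θ := by
  rw [betaStr, intervalIntegral.integral_sub (intervalIntegrable_one_div_gell hγ 0 θ)
    intervalIntegrable_const]
  simp

theorem betaStr_eq_arctan_sub (hγ : 0 < γ) {θ : ℝ} (hθ : θ ∈ Ioo (-(π / 2)) (π / 2)) :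
    betaStr γ θ = arctan (tan θ / γ) - θ := by
  rw [betaStr_eq_integral_sub hγ, integral_one_div_gell_eq_arctan hγ hθ]

theorem contDiff_betaStr (hγ : 0 < γ) : ContDiff ℝ ∞ (betaStr γ) := by
  have hcont : Continuous fun s => 1 / gell γ s - 1 :=
    (contDiff_one_div_gell hγ (n := 0)).continuous.sub continuous_const
  have hderiv (θ : ℝ) : HasDerivAt (betaStr γ) (1 / gell γ θ - 1) θ :=
    intervalIntegral.integral_hasDerivAt_right (hcont.intervalIntegrable 0 θ)
      hcont.stronglyMeasurable.stronglyMeasurableAtFilter hcont.continuousAt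
  rw [contDiff_infty_iff_deriv, funext fun θ => (hderiv θ).deriv]
  exact ⟨fun θ => (hderiv θ).differentiableAt, (contDiff_one_div_gell hγ).sub contDiff_const⟩

theorem betaStr_neg (γ θ : ℝ) : betaStr γ (-θ) = -betaStr γ θ :=
  ((gell_even γ).left_comp (1 / · - 1)).intervalIntegral_zero_neg θ

theorem betaStr_add_pi (hγ : 0 < γ) (θ : ℝ) : betaStr γ (θ + π) = betaStr γ θ := by
  have hint (a b : ℝ) : IntervalIntegrable (fun s => 1 / gell γ s - 1) volume a b :=
    (intervalIntegrable_one_div_gell hγ a b).sub intervalIntegrable_const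
  have hmean : ∫ s in (0:ℝ)..π, (1 / gell γ s - 1) = 0 := by
    rw [intervalIntegral.integral_sub (intervalIntegrable_one_div_gell hγ 0 π)
      intervalIntegrable_const, integral_one_div_gell_pi hγ]
    simp
  have hper : Function.Periodic (fun s => 1 / gell γ s - 1) π := (gell_periodic γ).comp (1 / · - 1)
  have hsplit := hper.intervalIntegral_add_eq_add 0 θ hint
  rw [zero_add] at hsplit
  rw [betaStr, betaStr, hsplit, hmean, add_zero]

end Ellipse

theorem straightening (γ : ℝ) (hγ : 1 ≤ γ) :
    -- (i)
    (∀ θ ∈ Set.Ioo (-(π / 2)) (π / 2),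
      HasDerivAt (fun t => Real.arctan (Real.tan t / γ)) (1 / gell γ θ) θ) ∧
    -- (ii)
    (∫ θ in (0:ℝ)..(2 * π), 1 / gell γ θ) = 2 * π ∧
    -- (iii)
    ContDiff ℝ (⊤ : ℕ∞) (betaStr γ) ∧
    (∀ θ, betaStr γ (-θ) = -betaStr γ θ) ∧
    (∀ θ, betaStr γ (θ + π) = betaStr γ θ) ∧
    (∀ θ ∈ Set.Ioo (-(π / 2)) (π / 2),
      betaStr γ θ = Real.arctan (Real.tan θ / γ) - θ) := by
  have hγ₀ : 0 < γ := zero_lt_one.trans_le hγ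
  exact ⟨fun θ hθ => hasDerivAt_arctan_tan_div hγ₀.ne' (cos_pos_of_mem_Ioo hθ).ne',
    integral_one_div_gell_two_pi hγ₀, contDiff_betaStr hγ₀, betaStr_neg γ, betaStr_add_pi hγ₀,
    fun θ hθ => betaStr_eq_arctan_sub hγ₀ hθ⟩
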